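/- arXiv:2004.09696 — 3 statements merged into one kernel-verified Lean document; each statement's English description precedes it below -/
import Mathlib

section
/- Let 0 < α < 1, let 0 < r < r₀, and let M : (0, r₀] → ℝ be a nondecreasing function with M(t) > 0 for all t, M(r₀) ≤ 1, and let κ : (0, r₀] → ℝ satisfy (log M(t))/t - (log M(α t))/t ≥ κ(t)/t for all t ∈ (r, r₀]. Then ∫_{r}^{r₀} κ(t)/t dt ≤ (log M(r₀) - log M(α r)) · log(1/α), and consequently M(α r) ≤ exp( - (1/log(1/α)) ∫_{r}^{r₀} κ(t)/t dt ). -/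
/-!
Write `g u = log M(u) / u`. The substitution `u = α t` turns `∫_r^{r₀} log M(α t) / t dt` into
`∫_{α r}^{α r₀} g`, so the integral of `(log M(t) - log M(α t)) / t` over `[r, r₀]` equals
`∫_{α r₀}^{r₀} g - ∫_{α r}^{r} g`. Both are integrals of `g` over intervals of logarithmic length
`log (1 / α)`, so monotonicity of `log M` bounds the first by `log M(r₀) · log (1 / α)` from above
and the second by `log M(α r) · log (1 / α)` from below. The bound on `M (α r)` follows because
`log M(r₀) ≤ 0`.
-/

open MeasureTheory intervalIntegral

open Set

theorem integral_comp_mul_div_self (f : ℝ → ℝ) {c : ℝ} (hc : c ≠ 0) (a b : ℝ) :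
    ∫ t in a..b, f (c * t) / t = ∫ u in c * a..c * b, f u / u := by
  have h : ∀ t, f (c * t) / t = c * (f (c * t) / (c * t)) := fun t => by
    rw [← mul_div_assoc, mul_div_mul_left _ _ hc]
  simp_rw [h, ← smul_eq_mul, intervalIntegral.integral_smul]
  exact smul_integral_comp_mul_left (fun u => f u / u) c

section

variable {f : ℝ → ℝ} {a b c : ℝ}

theorem continuousOn_inv_Icc_of_pos (ha : 0 < a) : ContinuousOn (fun t : ℝ => t⁻¹) (Icc a b) :=
  continuousOn_inv₀.mono fun _ ht => (ha.trans_le ht.1).ne'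

theorem MonotoneOn.intervalIntegrable_div_self (hf : MonotoneOn f (Icc a b)) (ha : 0 < a)
    (hab : a ≤ b) : IntervalIntegrable (fun t => f t / t) volume a b := by
  have hf' := (uIcc_of_le hab).symm ▸ hf
  simpa only [div_eq_mul_inv] using
    hf'.intervalIntegrable.mul_continuousOn (uIcc_of_le hab ▸ continuousOn_inv_Icc_of_pos ha)

theorem MonotoneOn.integral_div_self_le (hf : MonotoneOn f (Icc a b)) (ha : 0 < a)
    (hab : a ≤ b) : ∫ u in a..b, f u / u ≤ f b * Real.log (b / a) := by
  rw [← integral_inv_of_pos ha (ha.trans_le hab), ← intervalIntegral.integral_const_mul]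
  refine integral_mono_on hab (hf.intervalIntegrable_div_self ha hab)
    ((continuousOn_const.mul (continuousOn_inv_Icc_of_pos ha)).intervalIntegrable_of_Icc hab)
    fun u hu => ?_
  rw [div_eq_mul_inv]
  exact mul_le_mul_of_nonneg_right (hf hu (right_mem_Icc.2 hab) hu.2)
    (inv_nonneg.2 (ha.trans_le hu.1).le)

theorem MonotoneOn.mul_log_le_integral_div_self (hf : MonotoneOn f (Icc a b)) (ha : 0 < a)
    (hab : a ≤ b) : f a * Real.log (b / a) ≤ ∫ u in a..b, f u / u := by
  rw [← integral_inv_of_pos ha (ha.trans_le hab), ← intervalIntegral.integral_const_mul]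
  refine integral_mono_on hab
    ((continuousOn_const.mul (continuousOn_inv_Icc_of_pos ha)).intervalIntegrable_of_Icc hab)
    (hf.intervalIntegrable_div_self ha hab) fun u hu => ?_
  rw [div_eq_mul_inv]
  exact mul_le_mul_of_nonneg_right (hf (left_mem_Icc.2 hab) hu hu.1)
    (inv_nonneg.2 (ha.trans_le hu.1).le)

theorem MonotoneOn.intervalIntegrable_comp_mul_div_self
    (hf : MonotoneOn f (Icc (c * a) (c * b))) (hc : 0 < c) (ha : 0 < a) (hab : a ≤ b) :
    IntervalIntegrable (fun t => f (c * t) / t) volume a b := by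
  have hmaps : MapsTo (c * ·) (Icc a b) (Icc (c * a) (c * b)) := fun _ ht =>
    ⟨mul_le_mul_of_nonneg_left ht.1 hc.le, mul_le_mul_of_nonneg_left ht.2 hc.le⟩
  exact (hf.comp ((monotone_mul_left_of_nonneg hc.le).monotoneOn _) hmaps
    ).intervalIntegrable_div_self ha hab

theorem MonotoneOn.intervalIntegrable_sub_comp_mul_div_self (hf : MonotoneOn f (Icc (c * a) b))
    (hc : 0 < c) (hc1 : c ≤ 1) (ha : 0 < a) (hab : a ≤ b) :
    IntervalIntegrable (fun t => (f t - f (c * t)) / t) volume a b := by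
  have hcaa : c * a ≤ a := mul_le_of_le_one_left ha.le hc1
  have hcbb : c * b ≤ b := mul_le_of_le_one_left (ha.trans_le hab).le hc1
  simp_rw [sub_div]
  exact ((hf.mono (Icc_subset_Icc_left hcaa)).intervalIntegrable_div_self ha hab).sub
    ((hf.mono (Icc_subset_Icc_right hcbb)).intervalIntegrable_comp_mul_div_self hc ha hab)

theorem MonotoneOn.integral_sub_comp_mul_div_self_le (hf : MonotoneOn f (Icc (c * a) b))
    (hc : 0 < c) (hc1 : c ≤ 1) (ha : 0 < a) (hab : a ≤ b) :
    ∫ t in a..b, (f t - f (c * t)) / t ≤ (f b - f (c * a)) * Real.log (1 / c) := by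
  have hca : 0 < c * a := mul_pos hc ha
  have hcaa : c * a ≤ a := mul_le_of_le_one_left ha.le hc1
  have hcbb : c * b ≤ b := mul_le_of_le_one_left (ha.trans_le hab).le hc1
  have hcacb : c * a ≤ c * b := mul_le_mul_of_nonneg_left hab hc.le
  have hint : ∀ x y, c * a ≤ x → x ≤ y → y ≤ b →
      IntervalIntegrable (fun t => f t / t) volume x y := fun x y hx hxy hy =>
    (hf.mono (Icc_subset_Icc hx hy)).intervalIntegrable_div_self (hca.trans_le hx) hxy
  have hsplit : ∫ t in a..b, (f t - f (c * t)) / t =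
      (∫ u in c * b..b, f u / u) - ∫ u in c * a..a, f u / u := by
    simp_rw [sub_div]
    rw [integral_sub (hint a b hcaa hab le_rfl)
        ((hf.mono (Icc_subset_Icc_right hcbb)).intervalIntegrable_comp_mul_div_self hc ha hab),
      integral_comp_mul_div_self f hc.ne',
      integral_interval_sub_interval_comm' (hint a b hcaa hab le_rfl)
        (hint _ _ le_rfl hcacb hcbb) (hint _ _ le_rfl hcaa hab).symm]
  have hupper :=
    (hf.mono (Icc_subset_Icc_left hcacb)).integral_div_self_le (hca.trans_le hcacb) hcbb
  have hlower := (hf.mono (Icc_subset_Icc_right hab)).mul_log_le_integral_div_self hca hcaa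
  rw [div_mul_cancel_right₀ (ha.trans_le hab).ne'] at hupper
  rw [div_mul_cancel_right₀ ha.ne'] at hlower
  rw [hsplit, one_div, sub_mul]
  exact sub_le_sub hupper hlower

end

theorem integration_step (α r r₀ : ℝ) (M κ : ℝ → ℝ)
    (hα : 0 < α) (hα1 : α < 1) (hr : 0 < r) (hrr₀ : r < r₀)
    (hMono : MonotoneOn M (Set.Ioc 0 r₀))
    (hMpos : ∀ t ∈ Set.Ioc (0:ℝ) r₀, 0 < M t)
    (hMr₀ : M r₀ ≤ 1)
    (hκ : ∀ t ∈ Set.Ioc r r₀,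
      Real.log (M t) / t - Real.log (M (α * t)) / t ≥ κ t / t) :
    (∫ t in r..r₀, κ t / t) ≤
        (Real.log (M r₀) - Real.log (M (α * r))) * Real.log (1 / α) ∧
      M (α * r) ≤
        Real.exp (-(1 / Real.log (1 / α)) * ∫ t in r..r₀, κ t / t) := by
  have hlog : 0 < Real.log (1 / α) := Real.log_pos (one_lt_one_div hα hα1)
  have hαr : α * r ∈ Ioc 0 r₀ :=
    ⟨mul_pos hα hr, (mul_le_of_le_one_left hr.le hα1.le).trans hrr₀.le⟩
  have hr₀ : r₀ ∈ Ioc 0 r₀ := ⟨hr.trans hrr₀, le_rfl⟩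
  have hsub : Icc (α * r) r₀ ⊆ Ioc 0 r₀ := fun t ht => ⟨hαr.1.trans_le ht.1, ht.2⟩
  have hlogM : MonotoneOn (fun t => Real.log (M t)) (Icc (α * r) r₀) := fun x hx y hy hxy =>
    Real.log_le_log (hMpos x (hsub hx)) (hMono (hsub hx) (hsub hy) hxy)
  have hbound : (∫ t in r..r₀, κ t / t) ≤
      (Real.log (M r₀) - Real.log (M (α * r))) * Real.log (1 / α) := by
    by_cases hκint : IntervalIntegrable (fun t => κ t / t) volume r r₀
    · refine (integral_mono_on_of_le_Ioo hrr₀.le hκint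
        (hlogM.intervalIntegrable_sub_comp_mul_div_self hα hα1.le hr hrr₀.le)
        fun t ht => ?_).trans (hlogM.integral_sub_comp_mul_div_self_le hα hα1.le hr hrr₀.le)
      simpa only [sub_div] using hκ t (Ioo_subset_Ioc_self ht)
    · rw [integral_undef hκint]
      have hmono := hlogM (left_mem_Icc.2 hαr.2) (right_mem_Icc.2 hαr.2) hαr.2
      exact mul_nonneg (sub_nonneg.2 hmono) hlog.le
  refine ⟨hbound, ?_⟩
  have hlogr₀ : Real.log (M r₀) ≤ 0 := Real.log_nonpos (hMpos r₀ hr₀).le hMr₀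
  rw [← Real.exp_log (hMpos _ hαr), Real.exp_le_exp, neg_mul, le_neg, one_div,
    ← div_eq_inv_mul, div_le_iff₀ hlog]
  nlinarith
end

section
/- Let 0 < α < 1, 0 < β, γ > 1, and 0 < ε < 1 with α + ε < 1. Suppose for t > 0 small the real numbers a(t) = log(1/t) / log(2/(β ε^γ t^γ)), b(t) = log(1/(α t + ε t)) / log(2/(β ε^γ t^γ)) satisfy a(t) < 1. Then (b(t) - a(t)) / (1 - a(t)) ≥ log(1/(α+ε)) / log((2+2ε)/(β ε^γ t^{γ-1})) for all sufficiently small t > 0. -/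
/-!
Writing `L = log (2 / (c t^γ))` with `c = β ε^γ`, the quotient `(b - a) / (1 - a)` is exactly
`(log (1 / ((α + ε) t)) - log (1 / t)) / (L - log (1 / t)) = log (1 / (α + ε)) / log (2 / (c t^(γ-1)))`.
Since `γ > 1`, the denominator is positive for small `t`, and enlarging `2` to `2 + 2ε` only
enlarges it, while the numerator is nonnegative because `α + ε < 1`.
-/

open Real Filter Topology

lemma div_sub_div_div_one_sub_div {a b l : ℝ} (hl : l ≠ 0) :
    (b / l - a / l) / (1 - a / l) = (b - a) / (l - a) := by
  rw [div_sub_div_same, ← div_self hl, div_sub_div_same, div_div_div_cancel_right₀ hl]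

lemma log_one_div_mul_sub_log_one_div {x t : ℝ} (hx : x ≠ 0) (ht : t ≠ 0) :
    log (1 / (x * t)) - log (1 / t) = log (1 / x) := by
  simp only [one_div, log_inv, log_mul hx ht]
  ring

lemma log_div_mul_rpow_sub_log_one_div {K c p t : ℝ} (hK : K ≠ 0) (hc : c ≠ 0) (ht : 0 < t) :
    log (K / (c * t ^ p)) - log (1 / t) = log (K / (c * t ^ (p - 1))) := by
  have hpow (q : ℝ) : t ^ q ≠ 0 := (rpow_pos_of_pos ht q).ne'
  simp only [one_div, log_inv, log_div hK (mul_ne_zero hc (hpow _)), log_mul hc (hpow _),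
    log_rpow ht]
  ring

lemma eventually_mul_rpow_lt (c : ℝ) {p d : ℝ} (hp : 0 < p) (hd : 0 < d) :
    ∀ᶠ t in 𝓝[>] 0, c * t ^ p < d := by
  have hlim : Tendsto (fun t : ℝ => c * t ^ p) (𝓝 0) (𝓝 0) := by
    simpa [zero_rpow hp.ne'] using
      ((continuousAt_rpow_const 0 p (Or.inr hp.le)).tendsto.const_mul c)
  exact (hlim.mono_left nhdsWithin_le_nhds).eventually_lt_const hd

theorem kappa_lower_bound_holder_general (α β γ ε : ℝ)
    (hα : 0 < α) (hβ : 0 < β) (hγ : 1 < γ)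
    (hε : 0 < ε) (hαε : α + ε < 1) :
    ∀ᶠ t in nhdsWithin 0 (Set.Ioi (0:ℝ)),
      (Real.log (1 / (α * t + ε * t)) / Real.log (2 / (β * ε ^ γ * t ^ γ)) -
          Real.log (1 / t) / Real.log (2 / (β * ε ^ γ * t ^ γ))) /
        (1 - Real.log (1 / t) / Real.log (2 / (β * ε ^ γ * t ^ γ))) ≥
      Real.log (1 / (α + ε)) / Real.log ((2 + 2 * ε) / (β * ε ^ γ * t ^ (γ - 1))) := by
  set c := β * ε ^ γ
  have hc : 0 < c := by positivity
  filter_upwards [eventually_mul_rpow_lt c (sub_pos.2 hγ) two_pos, Ioo_mem_nhdsGT one_pos]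
    with t hct ⟨ht0, ht1⟩
  have hct0 : 0 < c * t ^ (γ - 1) := by positivity
  have hD : 0 < log (2 / (c * t ^ (γ - 1))) := log_pos ((one_lt_div hct0).2 hct)
  have hL : log (2 / (c * t ^ γ)) ≠ 0 := by
    have hsplit := log_div_mul_rpow_sub_log_one_div two_ne_zero hc.ne' ht0 (p := γ)
    have hlog : 0 < log (1 / t) := log_pos ((one_lt_div ht0).2 ht1)
    linarith
  rw [div_sub_div_div_one_sub_div hL, ← add_mul,
    log_one_div_mul_sub_log_one_div (by positivity) ht0.ne',
    log_div_mul_rpow_sub_log_one_div two_ne_zero hc.ne' ht0]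
  refine div_le_div_of_nonneg_left (log_nonneg ?_) hD (log_le_log (by positivity) ?_)
  · rw [le_div_iff₀ (by positivity)]
    linarith
  · gcongr
    linarith

theorem kappa_lower_bound_holder (α β γ ε : ℝ)
    (hα : 0 < α) (hα1 : α < 1) (hβ : 0 < β) (hγ : 1 < γ)
    (hε : 0 < ε) (hε1 : ε < 1) (hαε : α + ε < 1)
    (ha : ∀ᶠ t in nhdsWithin 0 (Set.Ioi (0:ℝ)),
      Real.log (1 / t) / Real.log (2 / (β * ε ^ γ * t ^ γ)) < 1) :
    ∀ᶠ t in nhdsWithin 0 (Set.Ioi (0:ℝ)),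
      (Real.log (1 / (α * t + ε * t)) / Real.log (2 / (β * ε ^ γ * t ^ γ)) -
          Real.log (1 / t) / Real.log (2 / (β * ε ^ γ * t ^ γ))) /
        (1 - Real.log (1 / t) / Real.log (2 / (β * ε ^ γ * t ^ γ))) ≥
      Real.log (1 / (α + ε)) / Real.log ((2 + 2 * ε) / (β * ε ^ γ * t ^ (γ - 1))) :=
  kappa_lower_bound_holder_general α β γ ε hα hβ hγ hε hαε
end

section
/- Let g : ℝ^m → ℝ be Hölder continuous of order β ∈ (0,1] with constant c, let E = {(x,s) ∈ ℝ^m × ℝ : s ≤ g(x)} and for t > 0 let F_t = {(x,s) : s ≥ g(x) + t}. Then the Euclidean distance between E and F_t is at least min(t/2, (2c)^{-1/β} t^{1/β}). -/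
/-!
If `p = (x, s)` lies below the graph of `g` and `q = (y, s')` lies at height at least `t` above it,
then `t ≤ (s' - s) + (g x - g y) ≤ d + c d^β` with `d = dist p q`, since both coordinate distances
are at most `d`. So either `d ≥ t / 2`, or `c d^β ≥ t / 2`, i.e. `d ≥ (t / (2c))^(1/β)`.
-/

open Real

lemma le_abs_sub_add_of_le_of_add_le {E : Type*} [SeminormedAddCommGroup E] {g : E → ℝ}
    {β c t : ℝ} (hg : ∀ x y, |g x - g y| ≤ c * ‖x - y‖ ^ β) {x y : E} {s s' : ℝ}
    (hs : s ≤ g x) (hs' : g y + t ≤ s') :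
    t ≤ |s - s'| + c * ‖x - y‖ ^ β := by
  have hgxy := (abs_le.mp (hg x y)).2
  have hss' := neg_abs_le (s - s')
  linarith

lemma WithLp.prod_le_dist_add_mul_dist_rpow {E : Type*} [SeminormedAddCommGroup E] {r : ENNReal}
    [Fact (1 ≤ r)] {g : E → ℝ} {β c t : ℝ} (hβ : 0 ≤ β) (hc : 0 ≤ c)
    (hg : ∀ x y, |g x - g y| ≤ c * ‖x - y‖ ^ β) {p q : WithLp r (E × ℝ)}
    (hp : p.snd ≤ g p.fst) (hq : g q.fst + t ≤ q.snd) :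
    t ≤ dist p q + c * dist p q ^ β := by
  have hsnd : |p.snd - q.snd| ≤ dist p q := WithLp.dist_snd_le p q
  have hfst : ‖p.fst - q.fst‖ ≤ dist p q := by
    rw [← dist_eq_norm]
    exact WithLp.dist_fst_le p q
  calc t ≤ |p.snd - q.snd| + c * ‖p.fst - q.fst‖ ^ β := le_abs_sub_add_of_le_of_add_le hg hp hq
    _ ≤ dist p q + c * dist p q ^ β := by gcongr

lemma min_le_of_le_add_mul_rpow {β c t d : ℝ} (hβ : 0 < β) (hc : 0 < c) (ht : 0 ≤ t) (hd : 0 ≤ d)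
    (h : t ≤ d + c * d ^ β) :
    min (t / 2) ((2 * c) ^ (-(1 / β)) * t ^ (1 / β)) ≤ d := by
  by_cases hsmall : c * d ^ β ≤ t / 2
  · exact (min_le_left _ _).trans (by linarith)
  refine (min_le_right _ _).trans ?_
  have h2c : 0 < 2 * c := by positivity
  have hlt : t / (2 * c) < d ^ β := by
    rw [div_lt_iff₀ h2c]
    linarith
  have hrw : (2 * c) ^ (-(1 / β)) * t ^ (1 / β) = (t / (2 * c)) ^ β⁻¹ := by
    rw [div_rpow ht h2c.le, rpow_neg h2c.le, one_div]
    ring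
  rw [hrw, rpow_inv_le_iff_of_pos (by positivity) hd hβ]
  exact hlt.le

theorem graph_sets_distance (m : ℕ) (g : EuclideanSpace ℝ (Fin m) → ℝ) (β c t : ℝ)
    (hβ : β ∈ Set.Ioc (0:ℝ) 1) (hc : 0 < c)
    (hg : ∀ x y, |g x - g y| ≤ c * ‖x - y‖ ^ β)
    (ht : 0 < t) :
    ∀ p ∈ {z : WithLp 2 (EuclideanSpace ℝ (Fin m) × ℝ) |
        ((WithLp.equiv 2 _) z).2 ≤ g ((WithLp.equiv 2 _) z).1},
      ∀ q ∈ {z : WithLp 2 (EuclideanSpace ℝ (Fin m) × ℝ) |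
        ((WithLp.equiv 2 _) z).2 ≥ g ((WithLp.equiv 2 _) z).1 + t},
        dist p q ≥ min (t / 2) ((2 * c) ^ (-(1 / β)) * t ^ (1 / β)) := by
  intro p hp q hq
  exact min_le_of_le_add_mul_rpow hβ.1 hc ht.le dist_nonneg
    (WithLp.prod_le_dist_add_mul_dist_rpow hβ.1.le hc.le hg hp hq)
end
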